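/- arXiv:1611.07302 — 2 statements merged into one kernel-verified Lean document; each statement's English description precedes it below -/
import Mathlib

section
/- Let n ≥ 1, let Λ, K_d be constant symmetric n×n real matrices, let M : ℝ → ℝ^{n×n} be differentiable with M(t) symmetric and invertible for every t, let D : ℝ → ℝ^{n×n} with D(t) symmetric, and let S : ℝ → ℝ^{n×n} with S(t) skew-symmetric. Let δ = (δ₁, δ₂) : ℝ → ℝⁿ × ℝⁿ be differentiable and satisfy the variational dynamics δ₁'(t) = −M(t)⁻¹Λδ₁(t) + M(t)⁻¹δ₂(t) and δ₂'(t) = −M(t)⁻¹Λδ₁(t) − (S(t) + D(t) − (1/2)M'(t) + K_d)·M(t)⁻¹δ₂(t). Define V(t) := (1/2)·δ₁(t)ᵀΛδ₁(t) + (1/2)·δ₂(t)ᵀM(t)⁻¹δ₂(t). Then V'(t) = −(1/2)·δ(t)ᵀ P(t) Υ(t) P(t) δ(t), where P(t) is the 2n×2n block-diagonal matrix diag(Λ, M(t)⁻¹) and Υ(t) is the 2n×2n block matrix [[2M(t)⁻¹, M(t)⁻¹ − I], [M(t)⁻¹ − I, 2(D(t) + K_d)]]. -/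
/-!
Differentiating `V`, with `(M⁻¹)' = -M⁻¹ M' M⁻¹`, gives
`V' = δ₁'ᵀ Λ δ₁ + δ₂'ᵀ M⁻¹ δ₂ - ½ zᵀ M' z` where `x = Λ δ₁` and `z = M⁻¹ δ₂`, i.e. `P δ = (x, z)`.
Substituting the dynamics, the Coriolis term `zᵀ S z` vanishes by skew-symmetry and the inertia
term `½ zᵀ M' z` cancels the one coming from `(M⁻¹)'`; what is left is `-½ (x, z)ᵀ Υ (x, z)`.
-/

open Matrix

namespace Matrix

variable {R : Type*} {m n : Type*} [Fintype m] [Fintype n]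

theorem IsSymm.dotProduct_mulVec_comm [CommSemiring R] {A : Matrix n n R} (hA : A.IsSymm)
    (u v : n → R) : u ⬝ᵥ A *ᵥ v = v ⬝ᵥ A *ᵥ u := by
  rw [dotProduct_mulVec, ← mulVec_transpose, hA, dotProduct_comm]

theorem IsSymm.dotProduct_mul_mul_mulVec [CommSemiring R] {P : Matrix n n R} (hP : P.IsSymm)
    (A : Matrix n n R) (v : n → R) : v ⬝ᵥ (P * A * P) *ᵥ v = (P *ᵥ v) ⬝ᵥ A *ᵥ (P *ᵥ v) := by
  rw [← mulVec_mulVec, ← mulVec_mulVec, hP.dotProduct_mulVec_comm, dotProduct_comm]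

theorem dotProduct_mulVec_self_eq_zero_of_transpose_eq_neg [CommRing R] [NoZeroDivisors R]
    [CharZero R] {S : Matrix n n R} (hS : Sᵀ = -S) (v : n → R) : v ⬝ᵥ S *ᵥ v = 0 := by
  have h : v ⬝ᵥ S *ᵥ v = -(v ⬝ᵥ S *ᵥ v) := by
    rw [← dotProduct_neg, ← neg_mulVec, ← hS, mulVec_transpose, dotProduct_mulVec, dotProduct_comm]
  exact self_eq_neg.1 h

theorem fromBlocks_mulVec_sumElim [NonUnitalNonAssocSemiring R] {l o : Type*} (A : Matrix l m R)
    (B : Matrix l n R) (C : Matrix o m R) (D : Matrix o n R) (x : m → R) (y : n → R) :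
    fromBlocks A B C D *ᵥ Sum.elim x y = Sum.elim (A *ᵥ x + B *ᵥ y) (C *ᵥ x + D *ᵥ y) := by
  simp [fromBlocks_mulVec]

theorem sumElim_dotProduct_fromBlocks_mulVec [CommSemiring R] (A : Matrix m m R) (B : Matrix m n R)
    (C : Matrix n m R) (D : Matrix n n R) (a x : m → R) (b y : n → R) :
    Sum.elim a b ⬝ᵥ fromBlocks A B C D *ᵥ Sum.elim x y =
      a ⬝ᵥ A *ᵥ x + a ⬝ᵥ B *ᵥ y + (b ⬝ᵥ C *ᵥ x + b ⬝ᵥ D *ᵥ y) := by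
  rw [fromBlocks_mulVec_sumElim, sumElim_dotProduct_sumElim, dotProduct_add, dotProduct_add]

end Matrix

open Matrix

section Calculus

variable {𝕜 : Type*} [NontriviallyNormedField 𝕜] {m n : Type*} [Fintype n] {t : 𝕜}

theorem hasDerivAt_matrix_iff {A : 𝕜 → Matrix m n 𝕜} {A' : Matrix m n 𝕜} :
    HasDerivAt A A' t ↔ ∀ i j, HasDerivAt (fun s => A s i j) (A' i j) t :=
  hasDerivAt_pi.trans (forall_congr' fun _ => hasDerivAt_pi)

theorem HasDerivAt.dotProduct {u v : 𝕜 → n → 𝕜} {u' v' : n → 𝕜}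
    (hu : HasDerivAt u u' t) (hv : HasDerivAt v v' t) :
    HasDerivAt (fun s => u s ⬝ᵥ v s) (u' ⬝ᵥ v t + u t ⬝ᵥ v') t := by
  simp only [_root_.dotProduct, ← Finset.sum_add_distrib]
  exact HasDerivAt.fun_sum fun i _ => (hasDerivAt_pi.1 hu i).mul (hasDerivAt_pi.1 hv i)

theorem HasDerivAt.mulVec {A : 𝕜 → Matrix m n 𝕜} {A' : Matrix m n 𝕜} {v : 𝕜 → n → 𝕜}
    {v' : n → 𝕜} (hA : HasDerivAt A A' t) (hv : HasDerivAt v v' t) :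
    HasDerivAt (fun s => A s *ᵥ v s) (A' *ᵥ v t + A t *ᵥ v') t :=
  hasDerivAt_pi.2 fun i => (hasDerivAt_pi.1 hA i).dotProduct hv

theorem HasDerivAt.dotProduct_mulVec_self {A : 𝕜 → Matrix n n 𝕜} {A' : Matrix n n 𝕜}
    {v : 𝕜 → n → 𝕜} {v' : n → 𝕜} (hA : HasDerivAt A A' t) (hv : HasDerivAt v v' t)
    (hsymm : (A t).IsSymm) :
    HasDerivAt (fun s => v s ⬝ᵥ A s *ᵥ v s) (2 * (v' ⬝ᵥ A t *ᵥ v t) + v t ⬝ᵥ A' *ᵥ v t) t := by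
  refine (hv.dotProduct (hA.mulVec hv)).congr_deriv ?_
  rw [dotProduct_add, hsymm.dotProduct_mulVec_comm (v t) v']
  ring

section MatrixInverse

/- `HasDerivAt` only sees the topology of `Matrix n n 𝕜`, so we may borrow the operator norm, under
which matrices form a complete normed algebra. -/
attribute [local instance] Matrix.linftyOpNormedRing Matrix.linftyOpNormedAlgebra

theorem HasDerivAt.matrix_inv [DecidableEq n] [CompleteSpace 𝕜] {A : 𝕜 → Matrix n n 𝕜}
    {A' : Matrix n n 𝕜} (hA : HasDerivAt A A' t) (h : IsUnit (A t).det) :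
    HasDerivAt (fun s => (A s)⁻¹) (-((A t)⁻¹ * A' * (A t)⁻¹)) t := by
  have : HasSummableGeomSeries (Matrix n n 𝕜) :=
    @instHasSummableGeomSeriesOfCompleteSpace _ _ (FiniteDimensional.complete 𝕜 _)
  obtain ⟨u, hu⟩ := (isUnit_iff_isUnit_det _).2 h
  have hinv := hasFDerivAt_ringInverse (𝕜 := 𝕜) u
  rw [hu] at hinv
  have := hinv.comp_hasDerivAt t hA
  simp only [Function.comp_def, ← nonsing_inv_eq_ringInverse, ← Ring.inverse_unit u, hu,
    _root_.neg_apply, ContinuousLinearMap.mulLeftRight_apply] at this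
  exact this

end MatrixInverse

end Calculus

theorem closedLoop_energy_identity {R n : Type*} [Field R] [CharZero R] [Fintype n] [DecidableEq n]
    {N S D K M' : Matrix n n R} (hN : N.IsSymm) (hS : Sᵀ = -S) (x z : n → R) :
    (-(N *ᵥ x) + z) ⬝ᵥ x + (-(N *ᵥ x) - (S + D - (1/2 : R) • M' + K) *ᵥ z) ⬝ᵥ z
        - (1/2 : R) * (z ⬝ᵥ M' *ᵥ z) =
      -(1/2 : R) * (Sum.elim x z ⬝ᵥ
        fromBlocks ((2 : R) • N) (N - 1) (N - 1) ((2 : R) • (D + K)) *ᵥ Sum.elim x z) := by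
  rw [sumElim_dotProduct_fromBlocks_mulVec]
  have hNxz := hN.dotProduct_mulVec_comm x z
  have hSz := dotProduct_mulVec_self_eq_zero_of_transpose_eq_neg hS z
  simp only [add_mulVec, sub_mulVec, smul_mulVec, one_mulVec, dotProduct_add, add_dotProduct,
    dotProduct_sub, sub_dotProduct, neg_dotProduct, dotProduct_smul, smul_dotProduct, smul_eq_mul]
  rw [dotProduct_comm (N *ᵥ x) x, dotProduct_comm (N *ᵥ x) z, dotProduct_comm (S *ᵥ z) z,
    dotProduct_comm (D *ᵥ z) z, dotProduct_comm (K *ᵥ z) z, dotProduct_comm (M' *ᵥ z) z,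
    dotProduct_comm z x]
  linear_combination (1/2 : R) * hNxz - hSz

theorem differential_lyapunov_derivative_general
    {n : ℕ}
    (Λ Kd : Matrix (Fin n) (Fin n) ℝ) (hΛsymm : Λ.IsSymm)
    (M M' : ℝ → Matrix (Fin n) (Fin n) ℝ)
    (hMderiv : ∀ t i j, HasDerivAt (fun s => M s i j) (M' t i j) t)
    (hMsymm : ∀ t, (M t).IsSymm)
    (hMinv : ∀ t, IsUnit (M t).det)
    (D : ℝ → Matrix (Fin n) (Fin n) ℝ)
    (S : ℝ → Matrix (Fin n) (Fin n) ℝ) (hSskew : ∀ t, (S t)ᵀ = -(S t))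
    (δ₁ δ₂ : ℝ → Fin n → ℝ)
    (hδ₁ : ∀ t, HasDerivAt δ₁ (-((M t)⁻¹ *ᵥ (Λ *ᵥ δ₁ t)) + (M t)⁻¹ *ᵥ δ₂ t) t)
    (hδ₂ : ∀ t, HasDerivAt δ₂
        (-((M t)⁻¹ *ᵥ (Λ *ᵥ δ₁ t))
          - (S t + D t - (1/2 : ℝ) • M' t + Kd) *ᵥ ((M t)⁻¹ *ᵥ δ₂ t)) t) :
    ∀ t, HasDerivAt
      (fun s => (1/2 : ℝ) * (δ₁ s ⬝ᵥ (Λ *ᵥ δ₁ s)) + (1/2 : ℝ) * (δ₂ s ⬝ᵥ ((M s)⁻¹ *ᵥ δ₂ s)))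
      (-(1/2 : ℝ) * (Sum.elim (δ₁ t) (δ₂ t) ⬝ᵥ
        ((Matrix.fromBlocks Λ 0 0 (M t)⁻¹ *
          Matrix.fromBlocks ((2 : ℝ) • (M t)⁻¹) ((M t)⁻¹ - 1) ((M t)⁻¹ - 1)
            ((2 : ℝ) • (D t + Kd)) *
          Matrix.fromBlocks Λ 0 0 (M t)⁻¹) *ᵥ Sum.elim (δ₁ t) (δ₂ t)))) t := by
  intro t
  have hN : (M t)⁻¹.IsSymm := (hMsymm t).inv
  have hΛ : HasDerivAt (fun _ => Λ) 0 t := hasDerivAt_matrix_iff.2 fun _ _ => hasDerivAt_const t _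
  have hV₁ := hΛ.dotProduct_mulVec_self (hδ₁ t) hΛsymm
  have hV₂ := ((hasDerivAt_matrix_iff.2 (hMderiv t)).matrix_inv (hMinv t)).dotProduct_mulVec_self
    (hδ₂ t) hN
  refine ((hV₁.const_mul (1/2 : ℝ)).add (hV₂.const_mul (1/2 : ℝ))).congr_deriv ?_
  rw [(hΛsymm.fromBlocks transpose_zero hN).dotProduct_mul_mul_mulVec, fromBlocks_mulVec_sumElim,
    ← closedLoop_energy_identity hN (hSskew t), neg_mulVec, dotProduct_neg,
    hN.dotProduct_mul_mul_mulVec]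
  simp only [zero_mulVec, add_zero, zero_add, dotProduct_zero]
  ring

/-- the time derivative of the differential Lyapunov function
`V = (1/2)δ₁ᵀΛδ₁ + (1/2)δ₂ᵀM⁻¹δ₂` along the variational dynamics of the virtual
closed-loop error system equals `-(1/2)δᵀ P Υ P δ` (equation (33) of the paper). -/
theorem differential_lyapunov_derivative
    {n : ℕ} (hn : 1 ≤ n)
    (Λ Kd : Matrix (Fin n) (Fin n) ℝ) (hΛsymm : Λ.IsSymm) (hKdsymm : Kd.IsSymm)
    (M M' : ℝ → Matrix (Fin n) (Fin n) ℝ)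
    (hMderiv : ∀ t i j, HasDerivAt (fun s => M s i j) (M' t i j) t)
    (hMsymm : ∀ t, (M t).IsSymm)
    (hMinv : ∀ t, IsUnit (M t).det)
    (D : ℝ → Matrix (Fin n) (Fin n) ℝ) (hDsymm : ∀ t, (D t).IsSymm)
    (S : ℝ → Matrix (Fin n) (Fin n) ℝ) (hSskew : ∀ t, (S t)ᵀ = -(S t))
    (δ₁ δ₂ : ℝ → Fin n → ℝ)
    (hδ₁ : ∀ t, HasDerivAt δ₁ (-((M t)⁻¹ *ᵥ (Λ *ᵥ δ₁ t)) + (M t)⁻¹ *ᵥ δ₂ t) t)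
    (hδ₂ : ∀ t, HasDerivAt δ₂
        (-((M t)⁻¹ *ᵥ (Λ *ᵥ δ₁ t))
          - (S t + D t - (1/2 : ℝ) • M' t + Kd) *ᵥ ((M t)⁻¹ *ᵥ δ₂ t)) t) :
    ∀ t, HasDerivAt
      (fun s => (1/2 : ℝ) * (δ₁ s ⬝ᵥ (Λ *ᵥ δ₁ s)) + (1/2 : ℝ) * (δ₂ s ⬝ᵥ ((M s)⁻¹ *ᵥ δ₂ s)))
      (-(1/2 : ℝ) * (Sum.elim (δ₁ t) (δ₂ t) ⬝ᵥ
        ((Matrix.fromBlocks Λ 0 0 (M t)⁻¹ *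
          Matrix.fromBlocks ((2 : ℝ) • (M t)⁻¹) ((M t)⁻¹ - 1) ((M t)⁻¹ - 1)
            ((2 : ℝ) • (D t + Kd)) *
          Matrix.fromBlocks Λ 0 0 (M t)⁻¹) *ᵥ Sum.elim (δ₁ t) (δ₂ t)))) t :=
  differential_lyapunov_derivative_general Λ Kd hΛsymm M M' hMderiv hMsymm hMinv D S hSskew δ₁ δ₂
    hδ₁ hδ₂
end

section
/- Let M : ℝⁿ → ℝ^{n×n} be differentiable with M(q) symmetric for every q. Fix q, v ∈ ℝⁿ. Define the matrices S(q,v) and N(q,v) by S(q,v)_{ij} := (1/2)·Σ_{k=1}^{n} v_k·(∂M_{ik}/∂q_j(q) − ∂M_{jk}/∂q_i(q)) and N(q,v)_{ij} := Σ_{k=1}^{n} (∂M_{ij}/∂q_k)(q)·v_k. Then [S(q,v) − (1/2)·N(q,v)]·v = −∇_q[(1/2)·vᵀM(q)v], where the gradient on the right is the gradient at q of the map q ↦ (1/2)·vᵀM(q)v with v held fixed. -/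
/-!
Let `J` be the Jacobian of `q ↦ M q *ᵥ v`, whose `j`-th column is `(∂M/∂q_j) v`. Then
`S = ½ (J - Jᵀ)`, and `N v = J v` since both are `Σ_{j,k} v_j v_k ∂M/∂q_k` up to swapping `j` and
`k`. Hence `(S - ½ N) v = -½ Jᵀ v`, and `(Jᵀ v)_i = vᵀ (∂M/∂q_i) v` is the `i`-th partial derivative
of `q ↦ vᵀ M(q) v`.
-/

open Matrix

/-- Partial derivative of a scalar function on `ℝⁿ` at `q` in the `i`-th coordinate direction. -/
noncomputable def pderivAt {n : ℕ} (f : (Fin n → ℝ) → ℝ) (q : Fin n → ℝ) (i : Fin n) : ℝ :=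
  fderiv ℝ f q (Pi.single i 1)

/-- The skew-symmetric Coriolis-type matrix
`S(q,v)_{ij} = (1/2)Σ_k v_k (∂M_{ik}/∂q_j − ∂M_{jk}/∂q_i)`. -/
noncomputable def coriolisS {n : ℕ} (M : (Fin n → ℝ) → Matrix (Fin n) (Fin n) ℝ)
    (q v : Fin n → ℝ) : Matrix (Fin n) (Fin n) ℝ :=
  Matrix.of fun i j =>
    (1/2 : ℝ) * ∑ k, v k *
      (pderivAt (fun q' => M q' i k) q j - pderivAt (fun q' => M q' j k) q i)

/-- The derivative of `M` along the velocity `v`: `N(q,v)_{ij} = Σ_k (∂M_{ij}/∂q_k) v_k`. -/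
noncomputable def mDot {n : ℕ} (M : (Fin n → ℝ) → Matrix (Fin n) (Fin n) ℝ)
    (q v : Fin n → ℝ) : Matrix (Fin n) (Fin n) ℝ :=
  Matrix.of fun i j => ∑ k, pderivAt (fun q' => M q' i j) q k * v k

lemma pderivAt_const_mul {n : ℕ} (c : ℝ) {f : (Fin n → ℝ) → ℝ} {q : Fin n → ℝ}
    (hf : DifferentiableAt ℝ f q) (i : Fin n) :
    pderivAt (fun q' => c * f q') q i = c * pderivAt f q i := by
  simp only [pderivAt, fderiv_const_mul hf, _root_.smul_apply, smul_eq_mul]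

noncomputable def pderivMatrix {n : ℕ} {m p : Type*} (M : (Fin n → ℝ) → Matrix m p ℝ)
    (q : Fin n → ℝ) (i : Fin n) : Matrix m p ℝ :=
  Matrix.of fun j k => pderivAt (fun q' => M q' j k) q i

lemma hasFDerivAt_dotProduct_mulVec {E : Type*} [NormedAddCommGroup E] [NormedSpace ℝ E]
    {m p : Type*} [Fintype m] [Fintype p] {M : E → Matrix m p ℝ} {q : E}
    (hM : ∀ j k, DifferentiableAt ℝ (fun q' => M q' j k) q) (v : m → ℝ) (w : p → ℝ) :
    HasFDerivAt (fun q' => v ⬝ᵥ (M q' *ᵥ w))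
      (∑ j, ∑ k, (v j * w k) • fderiv ℝ (fun q' => M q' j k) q) q := by
  simp only [dotProduct, mulVec, Finset.mul_sum]
  refine HasFDerivAt.fun_sum fun j _ => HasFDerivAt.fun_sum fun k _ => ?_
  convert ((hM j k).hasFDerivAt.mul_const (w k)).const_mul (v j) using 1
  · ext; ring
  · rw [smul_smul]

lemma pderivAt_dotProduct_mulVec {n : ℕ} {m p : Type*} [Fintype m] [Fintype p]
    {M : (Fin n → ℝ) → Matrix m p ℝ} {q : Fin n → ℝ}
    (hM : ∀ j k, DifferentiableAt ℝ (fun q' => M q' j k) q) (v : m → ℝ) (w : p → ℝ)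
    (i : Fin n) :
    pderivAt (fun q' => v ⬝ᵥ (M q' *ᵥ w)) q i = v ⬝ᵥ (pderivMatrix M q i *ᵥ w) := by
  rw [pderivAt, (hasFDerivAt_dotProduct_mulVec hM v w).fderiv]
  simp only [_root_.sum_apply, _root_.smul_apply, smul_eq_mul, pderivMatrix,
    dotProduct, mulVec, of_apply, Finset.mul_sum, pderivAt]
  exact Finset.sum_congr rfl fun _ _ => Finset.sum_congr rfl fun _ _ => by ring

noncomputable def jacobianMulVec {n : ℕ} (M : (Fin n → ℝ) → Matrix (Fin n) (Fin n) ℝ)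
    (q v : Fin n → ℝ) : Matrix (Fin n) (Fin n) ℝ :=
  Matrix.of fun i j => (pderivMatrix M q j *ᵥ v) i

section

variable {n : ℕ} (M : (Fin n → ℝ) → Matrix (Fin n) (Fin n) ℝ) (q v : Fin n → ℝ)

lemma coriolisS_eq_half_sub_transpose :
    coriolisS M q v = (1/2 : ℝ) • (jacobianMulVec M q v - (jacobianMulVec M q v)ᵀ) := by
  ext i j
  simp [coriolisS, jacobianMulVec, pderivMatrix, mulVec, dotProduct, mul_sub,
    Finset.sum_sub_distrib, mul_comm]

lemma mDot_mulVec_self : mDot M q v *ᵥ v = jacobianMulVec M q v *ᵥ v := by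
  ext i
  simp only [mDot, jacobianMulVec, pderivMatrix, mulVec, dotProduct, of_apply, Finset.sum_mul]
  rw [Finset.sum_comm]
  exact Finset.sum_congr rfl fun _ _ => Finset.sum_congr rfl fun _ _ => by ring

lemma jacobianMulVec_transpose_mulVec_self (i : Fin n) :
    ((jacobianMulVec M q v)ᵀ *ᵥ v) i = v ⬝ᵥ (pderivMatrix M q i *ᵥ v) := by
  simp only [jacobianMulVec, mulVec_transpose, vecMul, dotProduct, of_apply]

end

theorem coriolis_property_lagrangian_general
    {n : ℕ}
    (M : (Fin n → ℝ) → Matrix (Fin n) (Fin n) ℝ)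
    (hMdiff : ∀ i j, Differentiable ℝ fun q => M q i j)
    (q v : Fin n → ℝ) :
    (coriolisS M q v - (1/2 : ℝ) • mDot M q v) *ᵥ v
      = -fun i => pderivAt (fun q' => (1/2 : ℝ) * (v ⬝ᵥ (M q' *ᵥ v))) q i := by
  set J := jacobianMulVec M q v
  have hdiff : ∀ j k, DifferentiableAt ℝ (fun q' => M q' j k) q :=
    fun j k => (hMdiff j k).differentiableAt
  have hJ : (coriolisS M q v - (1/2 : ℝ) • mDot M q v) *ᵥ v = -((1/2 : ℝ) • (Jᵀ *ᵥ v)) := by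
    rw [sub_mulVec, smul_mulVec, mDot_mulVec_self, coriolisS_eq_half_sub_transpose,
      smul_mulVec, sub_mulVec]
    module
  ext i
  rw [hJ, Pi.neg_apply, Pi.neg_apply, Pi.smul_apply, jacobianMulVec_transpose_mulVec_self,
    pderivAt_const_mul _ (hasFDerivAt_dotProduct_mulVec hdiff v v).differentiableAt,
    pderivAt_dotProduct_mulVec hdiff, smul_eq_mul]

/-- Arimoto's structural property (equation (11) of the paper):
`[S(q,v) − (1/2)Ṁ(q,v)]v = −∇_q[(1/2)vᵀM(q)v]`. -/
theorem coriolis_property_lagrangian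
    {n : ℕ}
    (M : (Fin n → ℝ) → Matrix (Fin n) (Fin n) ℝ)
    (hMdiff : ∀ i j, Differentiable ℝ fun q => M q i j)
    (hMsymm : ∀ q, (M q).IsSymm)
    (q v : Fin n → ℝ) :
    (coriolisS M q v - (1/2 : ℝ) • mDot M q v) *ᵥ v
      = -fun i => pderivAt (fun q' => (1/2 : ℝ) * (v ⬝ᵥ (M q' *ᵥ v))) q i :=
  coriolis_property_lagrangian_general M hMdiff q v
end
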